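/- arXiv:1907.06156 — 7 statements merged into one kernel-verified Lean document; each statement's English description precedes it below -/
import Mathlib

section
/- Let K be a closed subset of ℂ not containing 0, and let d ≥ 1 be an integer. Suppose P(z₁,…,z_d) = Σ_{I ⊆ [d]} c_I · Π_{i∈I} z_i is a multilinear complex polynomial that vanishes only when z_i ∈ K for some i ∈ [d]. Then the polynomial Q(z) = c_∅ + c_{[d]} z vanishes only when z ∈ (−1)^{d+1} K·K···K (the d-fold Minkowski product of K with itself, multiplied by (−1)^{d+1}). -/
open Pointwise Polynomial

theorem stmt1 (K : Set ℂ) (hK : IsClosed K) (h0 : (0 : ℂ) ∉ K) (d : ℕ) (hd : 1 ≤ d)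
    (c : Finset (Fin d) → ℂ)
    (hP : ∀ z : Fin d → ℂ, (∑ I : Finset (Fin d), c I * ∏ i ∈ I, z i) = 0 → ∃ i, z i ∈ K) :
    ∀ w : ℂ, c ∅ + c Finset.univ * w = 0 →
      w ∈ ((-1 : ℂ) ^ (d + 1)) •
        {x : ℂ | ∃ f : Fin d → ℂ, (∀ i, f i ∈ K) ∧ x = ∏ i, f i} := by
  intro w hw
  -- diagonal restriction
  have key : ∀ z : ℂ, (∑ I : Finset (Fin d), c I * z ^ I.card) = 0 → z ∈ K := by
    intro z hz
    obtain ⟨i, hi⟩ := hP (fun _ => z) (by simpa [Finset.prod_const] using hz)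
    exact hi
  have h00 : (∑ I : Finset (Fin d), c I * (0:ℂ) ^ I.card) = c ∅ := by
    rw [Finset.sum_eq_single ∅]
    · simp
    · intro I _ hI
      have : I.card ≠ 0 := by simpa [Finset.card_eq_zero] using hI
      simp [zero_pow this]
    · simp
  have hc0 : c ∅ ≠ 0 := by
    intro h
    exact h0 (key 0 (by rw [h00, h]))
  have hcu : c Finset.univ ≠ 0 := by
    intro h
    rw [h, zero_mul, add_zero] at hw
    exact hc0 hw
  set p : Polynomial ℂ := ∑ I : Finset (Fin d), C (c I) * X ^ I.card with hp
  have heval : ∀ z : ℂ, p.eval z = ∑ I : Finset (Fin d), c I * z ^ I.card := by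
    intro z; simp [hp, eval_finset_sum]
  have hcoeff : p.coeff d = c Finset.univ := by
    rw [hp, finset_sum_coeff]
    rw [Finset.sum_eq_single Finset.univ]
    · simp [coeff_X_pow]
    · intro I _ hI
      have hIc : I.card ≠ d := by
        intro h
        exact hI (Finset.eq_univ_of_card I (by simpa using h))
      rw [coeff_C_mul, coeff_X_pow, if_neg (Ne.symm hIc), mul_zero]
    · simp
  have hp0 : p ≠ 0 := by
    intro h
    rw [h] at hcoeff
    exact hcu (by simpa using hcoeff.symm)
  have hdegle : p.natDegree ≤ d := by
    apply Polynomial.natDegree_sum_le_of_forall_le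
    intro I _
    apply le_trans (Polynomial.natDegree_C_mul_le _ _)
    simpa [Polynomial.natDegree_X_pow] using Finset.card_le_univ I
  have hdeg : p.natDegree = d :=
    le_antisymm hdegle (le_natDegree_of_ne_zero (by rw [hcoeff]; exact hcu))
  have hlead : p.leadingCoeff = c Finset.univ := by
    rw [Polynomial.leadingCoeff, hdeg, hcoeff]
  have hsplits : p.Splits := IsAlgClosed.splits p
  have hcard : p.roots.card = d := by
    rw [(Polynomial.splits_iff_card_roots).mp hsplits, hdeg]
  have hmem : ∀ r ∈ p.roots, r ∈ K := by
    intro r hr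
    have hroot := (Polynomial.mem_roots hp0).mp hr
    exact key r (by rw [← heval]; exact hroot)
  have hfact : p = C (c Finset.univ) * (p.roots.map fun a => X - C a).prod := by
    rw [← hlead]
    exact hsplits.eq_prod_roots
  -- evaluate factorization at 0
  have hprod0 : c ∅ = c Finset.univ * ((-1 : ℂ) ^ d * p.roots.prod) := by
    have h1 : p.eval 0 = c ∅ := by rw [heval, h00]
    rw [← h1]
    conv_lhs => rw [hfact]
    simp only [eval_mul, eval_C, eval_multiset_prod, Multiset.map_map, Function.comp,
      eval_sub, eval_X, eval_C, zero_sub]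
    congr 1
    rw [show (fun a : ℂ => -a) = fun a : ℂ => (-1) * a by funext a; ring,
      Multiset.prod_map_mul]
    congr 1
    · rw [Multiset.map_const', Multiset.prod_replicate, hcard]
    · simp
  -- build the witness function
  set l : List ℂ := p.roots.toList with hl
  have hlen : l.length = d := by rw [hl, Multiset.length_toList, hcard]
  set f : Fin d → ℂ := fun i => l.get (Fin.cast hlen.symm i) with hf
  have hfK : ∀ i, f i ∈ K := by
    intro i
    apply hmem
    rw [← Multiset.mem_toList]
    apply List.get_mem
  have hlp : l.prod = ∏ i : Fin l.length, l.get i := by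
    conv_lhs => rw [← List.ofFn_get l]
    rw [List.prod_ofFn]
  have hfprod : (∏ i, f i) = p.roots.prod := by
    rw [← Multiset.prod_toList, ← hl, hlp, hf]
    exact Fin.prod_congr' l.get hlen.symm
  rw [Set.mem_smul_set]
  refine ⟨∏ i, f i, ⟨f, hfK, rfl⟩, ?_⟩
  rw [smul_eq_mul, hfprod]
  apply mul_left_cancel₀ hcu
  linear_combination hprod0 - hw
end

section
/- Let c ≥ 0, γ > 0, β + 2c > 0, and define f(x) = c·cos x + √(c²cos²x + (β+2c)/γ). Then g(x) = log f(x) is convex on the interval [π/2, 3π/2]. -/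
open Real Set

/-- `arsinh` is convex on `(-∞, 0]`. -/
lemma arsinh_convexOn_Iic : ConvexOn ℝ (Set.Iic (0:ℝ)) Real.arsinh := by
  have hne : ∀ x : ℝ, 1 + x ^ 2 ≠ 0 := fun x => by positivity
  have hsqrt : ∀ x : ℝ, Real.sqrt (1 + x ^ 2) ≠ 0 := fun x => by
    positivity
  apply convexOn_of_hasDerivWithinAt2_nonneg (f' := fun x => (Real.sqrt (1 + x ^ 2))⁻¹)
    (f'' := fun x => -((2 * x) / (2 * Real.sqrt (1 + x ^ 2))) / (Real.sqrt (1 + x ^ 2)) ^ 2)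
    (convex_Iic 0) Real.continuous_arsinh.continuousOn
  · intro x _
    exact (Real.hasDerivAt_arsinh x).hasDerivWithinAt
  · intro x _
    have h1 : HasDerivAt (fun x : ℝ => 1 + x ^ 2) (2 * x) x := by
      simpa using ((hasDerivAt_pow 2 x).const_add 1)
    have h2 := (h1.sqrt (hne x)).inv (hsqrt x)
    exact h2.hasDerivWithinAt
  · intro x hx
    rw [interior_Iic, mem_Iio] at hx
    have h1 : 0 ≤ -((2 * x) / (2 * Real.sqrt (1 + x ^ 2))) := by
      rw [neg_nonneg]
      apply div_nonpos_of_nonpos_of_nonneg (by linarith) (by positivity)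
    positivity

/-- `x ↦ a * cos x` is convex on `[π/2, 3π/2]` when `0 ≤ a`. -/
lemma mul_cos_convexOn {a : ℝ} (ha : 0 ≤ a) :
    ConvexOn ℝ (Set.Icc (Real.pi / 2) (3 * Real.pi / 2)) (fun x => a * Real.cos x) := by
  apply convexOn_of_hasDerivWithinAt2_nonneg (f' := fun x => a * (-Real.sin x))
    (f'' := fun x => a * (-Real.cos x)) (convex_Icc _ _)
    (continuous_const.mul Real.continuous_cos).continuousOn
  · intro x _
    exact ((Real.hasDerivAt_cos x).const_mul a).hasDerivWithinAt
  · intro x _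
    exact ((Real.hasDerivAt_sin x).neg.const_mul a).hasDerivWithinAt
  · intro x hx
    rw [interior_Icc, mem_Ioo] at hx
    have hcos : Real.cos x ≤ 0 :=
      Real.cos_nonpos_of_pi_div_two_le_of_le hx.1.le (by linarith [hx.2])
    have : 0 ≤ -Real.cos x := by linarith
    positivity

lemma log_add_sqrt_eq (k u : ℝ) (hk : 0 < k) :
    Real.log (u + Real.sqrt (u ^ 2 + k)) =
      Real.log (Real.sqrt k) + Real.arsinh (u / Real.sqrt k) := by
  have hs : (0:ℝ) < Real.sqrt k := Real.sqrt_pos.2 hk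
  have hlt : |u| < Real.sqrt (u ^ 2 + k) := by
    have : Real.sqrt (u ^ 2) < Real.sqrt (u ^ 2 + k) :=
      Real.sqrt_lt_sqrt (by positivity) (by linarith)
    simpa [Real.sqrt_sq_eq_abs] using this
  have hpos : 0 < u + Real.sqrt (u ^ 2 + k) := by
    have := neg_abs_le u
    linarith
  rw [Real.arsinh]
  have harg : u / Real.sqrt k + Real.sqrt (1 + (u / Real.sqrt k) ^ 2)
      = (u + Real.sqrt (u ^ 2 + k)) / Real.sqrt k := by
    have h1 : 1 + (u / Real.sqrt k) ^ 2 = (u ^ 2 + k) / k := by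
      rw [div_pow, Real.sq_sqrt hk.le]
      field_simp; ring
    rw [h1, Real.sqrt_div (by positivity) k, ← add_div]
  rw [harg, Real.log_div (ne_of_gt hpos) (ne_of_gt hs)]
  ring

theorem stmt3 (β γ c : ℝ) (hc : 0 ≤ c) (hγ : 0 < γ) (hβc : 0 < β + 2 * c) :
    ConvexOn ℝ (Set.Icc (Real.pi / 2) (3 * Real.pi / 2))
      (fun x => Real.log (c * Real.cos x +
        Real.sqrt (c ^ 2 * (Real.cos x) ^ 2 + (β + 2 * c) / γ))) := by
  set k := (β + 2 * c) / γ with hkdef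
  have hk : 0 < k := div_pos hβc hγ
  have hs : (0:ℝ) < Real.sqrt k := Real.sqrt_pos.2 hk
  set a := c / Real.sqrt k with hadef
  have ha : 0 ≤ a := div_nonneg hc hs.le
  set S := Set.Icc (Real.pi / 2) (3 * Real.pi / 2) with hSdef
  have key : (fun x => Real.log (c * Real.cos x +
        Real.sqrt (c ^ 2 * (Real.cos x) ^ 2 + k)))
      = fun x => Real.log (Real.sqrt k) + Real.arsinh (a * Real.cos x) := by
    funext x
    have h1 := log_add_sqrt_eq k (c * Real.cos x) hk
    have h2 : (c * Real.cos x) ^ 2 = c ^ 2 * (Real.cos x) ^ 2 := by ring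
    have h3 : c * Real.cos x / Real.sqrt k = a * Real.cos x := by
      rw [hadef]; ring
    rw [h2, h3] at h1
    exact h1
  rw [key]
  -- convexity of the composition
  have hcos : ConvexOn ℝ S (fun x => a * Real.cos x) := mul_cos_convexOn ha
  have himg : ((fun x => a * Real.cos x) '' S) ⊆ Set.Iic 0 := by
    rintro y ⟨x, hx, rfl⟩
    have hcosx : Real.cos x ≤ 0 :=
      Real.cos_nonpos_of_pi_div_two_le_of_le hx.1 (by rw [hSdef] at hx; linarith [hx.2])
    exact mul_nonpos_of_nonneg_of_nonpos ha hcosx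
  have hconv_img : Convex ℝ ((fun x => a * Real.cos x) '' S) := by
    apply IsPreconnected.convex
    exact (isPreconnected_Icc).image _ (continuous_const.mul Real.continuous_cos).continuousOn
  have harsinh : ConvexOn ℝ ((fun x => a * Real.cos x) '' S) Real.arsinh :=
    arsinh_convexOn_Iic.subset himg hconv_img
  have hcomp : ConvexOn ℝ S (Real.arsinh ∘ fun x => a * Real.cos x) :=
    harsinh.comp hcos (Real.arsinh_strictMono.monotone.monotoneOn _)
  have hconst : ConvexOn ℝ S (fun _ : ℝ => Real.log (Real.sqrt k)) :=
    convexOn_const _ (convex_Icc _ _)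
  exact hconst.add hcomp
end

section
/- Let c ≥ 0, γ > 0, β + 2c > 0, define f(x) = c·cos x + √(c²cos²x + (β+2c)/γ), and let r₀ > 0 satisfy r₀² = (βγ−1)/γ² + (c+1/γ)². Suppose z₁,…,z_k are complex numbers on the circle |z − c| = r₀ with arguments θ₁,…,θ_k ∈ [π/2, 3π/2]. Let θ̂ = (θ₁+⋯+θ_k)/k and r̂ = f(θ̂). Then Π_{i=1}^k |z_i| ≥ r̂^k. -/
open Real Set

noncomputable def Ffun (c a θ : ℝ) : ℝ := c * Real.cos θ + Real.sqrt (c ^ 2 * Real.cos θ ^ 2 + a)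
noncomputable def Ufun (c a θ : ℝ) : ℝ := c ^ 2 * Real.cos θ ^ 2 + a
noncomputable def Gfun (c a θ : ℝ) : ℝ := -(c * Real.sin θ) / Real.sqrt (Ufun c a θ)

variable {c a θ : ℝ}

lemma U_pos (ha : 0 < a) : 0 < Ufun c a θ := by unfold Ufun; positivity

lemma sqrtU_pos (ha : 0 < a) : 0 < Real.sqrt (Ufun c a θ) := Real.sqrt_pos.mpr (U_pos ha)

lemma F_pos (ha : 0 < a) : 0 < Ffun c a θ := by
  have h1 : Real.sqrt (c ^ 2 * Real.cos θ ^ 2) < Real.sqrt (c ^ 2 * Real.cos θ ^ 2 + a) :=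
    Real.sqrt_lt_sqrt (by positivity) (by linarith)
  have h2 : Real.sqrt (c ^ 2 * Real.cos θ ^ 2) = |c * Real.cos θ| := by
    rw [show c ^ 2 * Real.cos θ ^ 2 = (c * Real.cos θ) ^ 2 by ring, Real.sqrt_sq_eq_abs]
  have := neg_abs_le (c * Real.cos θ)
  unfold Ffun
  linarith [h1, h2 ▸ h1]

lemma hasDerivAt_U : HasDerivAt (Ufun c a) (-(2 * c ^ 2 * Real.cos θ * Real.sin θ)) θ := by
  have h := (((Real.hasDerivAt_cos θ).pow 2).const_mul (c ^ 2)).add_const a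
  refine HasDerivAt.congr_deriv h ?_
  push_cast
  ring

lemma hasDerivAt_logF (ha : 0 < a) :
    HasDerivAt (fun θ => Real.log (Ffun c a θ)) (Gfun c a θ) θ := by
  have hU := U_pos (c := c) (θ := θ) ha
  have hs := sqrtU_pos (c := c) (θ := θ) ha
  have hs2 : Real.sqrt (Ufun c a θ) ^ 2 = Ufun c a θ := Real.sq_sqrt hU.le
  have hF := F_pos (c := c) (θ := θ) ha
  have hsq : HasDerivAt (fun θ => Real.sqrt (Ufun c a θ))
      (-(2 * c ^ 2 * Real.cos θ * Real.sin θ) / (2 * Real.sqrt (Ufun c a θ))) θ :=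
    hasDerivAt_U.sqrt hU.ne'
  have hFd : HasDerivAt (Ffun c a)
      (c * -Real.sin θ + -(2 * c ^ 2 * Real.cos θ * Real.sin θ) / (2 * Real.sqrt (Ufun c a θ))) θ :=
    ((Real.hasDerivAt_cos θ).const_mul c).add hsq
  have h := hFd.log hF.ne'
  convert h using 1
  unfold Gfun Ffun Ufun at *
  rw [div_eq_div_iff hs.ne' (by positivity)]
  field_simp
  nlinarith [hs2, hs]

lemma hasDerivAt_G (ha : 0 < a) :
    HasDerivAt (Gfun c a)
      ((-(c * Real.cos θ) * Real.sqrt (Ufun c a θ) -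
        -(c * Real.sin θ) * (-(2 * c ^ 2 * Real.cos θ * Real.sin θ) / (2 * Real.sqrt (Ufun c a θ)))) /
        Real.sqrt (Ufun c a θ) ^ 2) θ := by
  have hs := sqrtU_pos (c := c) (θ := θ) ha
  exact (((Real.hasDerivAt_sin θ).const_mul c).neg).div (hasDerivAt_U.sqrt (U_pos ha).ne') hs.ne'

lemma G_deriv_nonneg (ha : 0 < a) (hc : 0 ≤ c) (hcos : Real.cos θ ≤ 0) :
    0 ≤ (-(c * Real.cos θ) * Real.sqrt (Ufun c a θ) -
        -(c * Real.sin θ) * (-(2 * c ^ 2 * Real.cos θ * Real.sin θ) / (2 * Real.sqrt (Ufun c a θ)))) /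
        Real.sqrt (Ufun c a θ) ^ 2 := by
  have hs := sqrtU_pos (c := c) (θ := θ) ha
  have hs2 : Real.sqrt (Ufun c a θ) ^ 2 = Ufun c a θ := Real.sq_sqrt (U_pos ha).le
  apply div_nonneg _ (by positivity)
  rw [sub_nonneg, ← mul_div_assoc, div_le_iff₀ (by positivity)]
  have heq : -(c * Real.cos θ) * Real.sqrt (Ufun c a θ) * (2 * Real.sqrt (Ufun c a θ))
      = 2 * (-(c * Real.cos θ)) * Ufun c a θ := by
    linear_combination (-2 * c * Real.cos θ) * hs2
  rw [heq]
  unfold Ufun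
  have hccos : 0 ≤ c * -Real.cos θ := mul_nonneg hc (by linarith)
  have h1 : c ^ 3 * Real.cos θ * (Real.sin θ ^ 2 + Real.cos θ ^ 2) = c ^ 3 * Real.cos θ := by
    rw [Real.sin_sq_add_cos_sq]; ring
  nlinarith [h1, mul_nonneg (sq_nonneg c) hccos, mul_nonneg ha.le hccos]

lemma convexOn_logF (ha : 0 < a) (hc : 0 ≤ c) :
    ConvexOn ℝ (Set.Icc (Real.pi / 2) (3 * Real.pi / 2)) (fun θ => Real.log (Ffun c a θ)) := by
  apply convexOn_of_hasDerivWithinAt2_nonneg (f' := Gfun c a)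
    (f'' := fun θ => (-(c * Real.cos θ) * Real.sqrt (Ufun c a θ) -
        -(c * Real.sin θ) * (-(2 * c ^ 2 * Real.cos θ * Real.sin θ) / (2 * Real.sqrt (Ufun c a θ)))) /
        Real.sqrt (Ufun c a θ) ^ 2)
    (convex_Icc _ _)
  · exact fun x _ => ((hasDerivAt_logF ha).continuousAt).continuousWithinAt
  · exact fun x _ => (hasDerivAt_logF ha).hasDerivWithinAt
  · exact fun x _ => (hasDerivAt_G ha).hasDerivWithinAt
  · intro x hx
    rw [interior_Icc] at hx
    apply G_deriv_nonneg ha hc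
    apply Real.cos_nonpos_of_pi_div_two_le_of_le hx.1.le
    have := hx.2.le
    linarith [Real.pi_pos]

theorem stmt4 (β γ c r₀ : ℝ) (hc : 0 ≤ c) (hγ : 0 < γ) (hβc : 0 < β + 2 * c)
    (hr₀ : 0 < r₀) (hr₀sq : r₀ ^ 2 = (β * γ - 1) / γ ^ 2 + (c + 1 / γ) ^ 2)
    (k : ℕ) (hk : 0 < k) (z : Fin k → ℂ) (θ : Fin k → ℝ)
    (hθ : ∀ i, θ i ∈ Set.Icc (Real.pi / 2) (3 * Real.pi / 2))
    (hcirc : ∀ i, ‖z i - (c : ℂ)‖ = r₀)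
    (harg : ∀ i, z i = (‖z i‖ : ℂ) * Complex.exp ((θ i : ℂ) * Complex.I)) :
    (∏ i, ‖z i‖) ≥
      (c * Real.cos ((∑ i, θ i) / k) +
        Real.sqrt (c ^ 2 * (Real.cos ((∑ i, θ i) / k)) ^ 2 + (β + 2 * c) / γ)) ^ k := by
  set A : ℝ := (β + 2 * c) / γ with hAdef
  have hA : 0 < A := div_pos hβc hγ
  have hr2 : r₀ ^ 2 = A + c ^ 2 := by
    rw [hr₀sq, hAdef]; field_simp; ring
  -- each |z i| equals Ffun c A (θ i)
  have habs : ∀ i, ‖z i‖ = Ffun c A (θ i) := by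
    intro i
    set r : ℝ := ‖z i‖ with hrdef
    have hr : 0 ≤ r := norm_nonneg _
    have h := hcirc i
    rw [harg i] at h
    have hre : ((r : ℂ) * Complex.exp ((θ i : ℂ) * Complex.I) - (c : ℂ)).re
        = r * Real.cos (θ i) - c := by
      simp [Complex.mul_re, Complex.exp_ofReal_mul_I_re, Complex.exp_ofReal_mul_I_im]
    have him : ((r : ℂ) * Complex.exp ((θ i : ℂ) * Complex.I) - (c : ℂ)).im
        = r * Real.sin (θ i) := by
      simp [Complex.mul_im, Complex.exp_ofReal_mul_I_re, Complex.exp_ofReal_mul_I_im]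
    rw [← hrdef] at h
    have hsq : (r * Real.cos (θ i) - c) ^ 2 + (r * Real.sin (θ i)) ^ 2 = r₀ ^ 2 := by
      rw [← h, Complex.sq_norm, Complex.normSq_apply, hre, him]; ring
    have hpyth := Real.sin_sq_add_cos_sq (θ i)
    have hquad : (r - c * Real.cos (θ i)) ^ 2 = c ^ 2 * Real.cos (θ i) ^ 2 + A := by
      linear_combination hsq + hr2 - r ^ 2 * hpyth
    have hs : Real.sqrt (c ^ 2 * Real.cos (θ i) ^ 2 + A) = |r - c * Real.cos (θ i)| := by
      rw [← hquad, Real.sqrt_sq_eq_abs]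
    have hgt : |c * Real.cos (θ i)| < Real.sqrt (c ^ 2 * Real.cos (θ i) ^ 2 + A) := by
      have h1 : Real.sqrt ((c * Real.cos (θ i)) ^ 2) <
          Real.sqrt ((c * Real.cos (θ i)) ^ 2 + A) :=
        Real.sqrt_lt_sqrt (sq_nonneg _) (by linarith)
      rw [Real.sqrt_sq_eq_abs] at h1
      rw [show c ^ 2 * Real.cos (θ i) ^ 2 + A = (c * Real.cos (θ i)) ^ 2 + A by ring]
      exact h1
    rcases abs_cases (r - c * Real.cos (θ i)) with ⟨he, _⟩ | ⟨he, hneg⟩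
    · rw [hrdef] at *
      unfold Ffun
      rw [hs, he]; ring
    · exfalso
      have := le_abs_self (c * Real.cos (θ i))
      rw [hs, he] at hgt
      linarith
  -- Jensen
  have hk' : (0 : ℝ) < k := Nat.cast_pos.mpr hk
  have cvx := convexOn_logF (c := c) hA hc
  have hjen := cvx.map_sum_le (t := Finset.univ) (w := fun _ : Fin k => (k : ℝ)⁻¹)
    (p := θ) (fun i _ => by positivity)
    (by simp [Finset.card_univ]; field_simp) (fun i _ => hθ i)
  have hsum : (∑ i : Fin k, (k : ℝ)⁻¹ • θ i) = (∑ i, θ i) / k := by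
    rw [Finset.smul_sum.symm]
    simp [smul_eq_mul]
    ring
  rw [hsum] at hjen
  simp only [smul_eq_mul] at hjen
  have hjen2 : (k : ℝ) * Real.log (Ffun c A ((∑ i, θ i) / k)) ≤
      ∑ i, Real.log (Ffun c A (θ i)) := by
    rw [← Finset.mul_sum] at hjen
    calc (k : ℝ) * Real.log (Ffun c A ((∑ i, θ i) / k))
        ≤ (k : ℝ) * ((k : ℝ)⁻¹ * ∑ i, Real.log (Ffun c A (θ i))) := by
          exact mul_le_mul_of_nonneg_left hjen hk'.le
      _ = ∑ i, Real.log (Ffun c A (θ i)) := by field_simp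
  have hFbar : 0 < Ffun c A ((∑ i, θ i) / k) := F_pos hA
  have goal2 : Ffun c A ((∑ i, θ i) / k) ^ k ≤ ∏ i, Ffun c A (θ i) := by
    have h1 : Ffun c A ((∑ i, θ i) / k) ^ k
        = Real.exp ((k : ℝ) * Real.log (Ffun c A ((∑ i, θ i) / k))) := by
      rw [Real.exp_nat_mul, Real.exp_log hFbar]
    have h2 : (∏ i, Ffun c A (θ i)) = Real.exp (∑ i, Real.log (Ffun c A (θ i))) := by
      rw [Real.exp_sum]
      exact Finset.prod_congr rfl fun i _ => (Real.exp_log (F_pos hA)).symm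
    rw [h1, h2]
    exact Real.exp_le_exp.mpr hjen2
  have : (∏ i, ‖z i‖) = ∏ i, Ffun c A (θ i) :=
    Finset.prod_congr rfl fun i _ => habs i
  rw [ge_iff_le, this]
  exact goal2
end

section
/- Let c < 0 with c < −r₀ < 0, γ > 0, β + 2c > 0, and define f̃(x) = c·cos x − √(c²cos²x + (β+2c)/γ). Then g̃(x) = log f̃(x) is convex on the set of x ∈ [π/2, 3π/2] where c²γcos²x + β + 2c > 0. -/
open Real Set

theorem stmt5 (β γ c r₀ : ℝ) (hr₀ : 0 < r₀) (hc : c < -r₀) (hγ : 0 < γ)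
    (hβc : 0 < β + 2 * c) :
    ConvexOn ℝ
      {x ∈ Set.Icc (Real.pi / 2) (3 * Real.pi / 2) |
        c ^ 2 * γ * (Real.cos x) ^ 2 + β + 2 * c > 0}
      (fun x => Real.log (c * Real.cos x -
        Real.sqrt (c ^ 2 * (Real.cos x) ^ 2 + (β + 2 * c) / γ))) := by
  set k : ℝ := (β + 2 * c) / γ with hk
  have hkpos : 0 < k := div_pos hβc hγ
  set s : ℝ → ℝ := fun x => Real.sqrt (c ^ 2 * (Real.cos x) ^ 2 + k) with hs
  -- set is the whole Icc
  have hset : {x ∈ Set.Icc (Real.pi / 2) (3 * Real.pi / 2) |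
      c ^ 2 * γ * (Real.cos x) ^ 2 + β + 2 * c > 0}
      = Set.Icc (Real.pi / 2) (3 * Real.pi / 2) := by
    ext x
    simp only [Set.mem_setOf_eq, Set.mem_Icc, and_iff_left_iff_imp]
    intro _
    nlinarith [sq_nonneg (c * Real.cos x), sq_nonneg (Real.cos x)]
  rw [hset]
  have hin : ∀ x : ℝ, 0 < c ^ 2 * (Real.cos x) ^ 2 + k := by
    intro x; positivity
  have hspos : ∀ x : ℝ, 0 < s x := fun x => Real.sqrt_pos.2 (hin x)
  have hs2 : ∀ x : ℝ, s x ^ 2 = c ^ 2 * (Real.cos x) ^ 2 + k := fun x =>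
    Real.sq_sqrt (hin x).le
  have hfneg : ∀ x : ℝ, c * Real.cos x - s x < 0 := by
    intro x
    have h1 : c * Real.cos x ≤ |c * Real.cos x| := le_abs_self _
    have h2 : |c * Real.cos x| < s x := by
      rw [← Real.sqrt_sq_eq_abs]
      apply Real.sqrt_lt_sqrt (sq_nonneg _)
      nlinarith
    linarith
  have hfne : ∀ x : ℝ, c * Real.cos x - s x ≠ 0 := fun x => (hfneg x).ne
  -- derivative of s
  have hderiv_s : ∀ x : ℝ, HasDerivAt s
      (c ^ 2 * (2 * Real.cos x * (-Real.sin x)) / (2 * s x)) x := by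
    intro x
    have h1 : HasDerivAt (fun x => c ^ 2 * (Real.cos x) ^ 2 + k)
        (c ^ 2 * (2 * Real.cos x * (-Real.sin x))) x := by
      have := ((Real.hasDerivAt_cos x).pow 2).const_mul (c ^ 2)
      simpa [mul_comm, mul_assoc, mul_left_comm, pow_two] using this.add_const k
    exact h1.sqrt (hin x).ne'
  -- first derivative of g
  have hderiv_g : ∀ x : ℝ, HasDerivAt
      (fun x => Real.log (c * Real.cos x - s x)) (c * Real.sin x / s x) x := by
    intro x
    have hf : HasDerivAt (fun x => c * Real.cos x - s x)
        (c * (-Real.sin x) - c ^ 2 * (2 * Real.cos x * (-Real.sin x)) / (2 * s x)) x :=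
      ((Real.hasDerivAt_cos x).const_mul c).sub (hderiv_s x)
    have := hf.log (hfne x)
    convert this using 1
    have h1 := (hspos x).ne'
    have h2 := hfne x
    field_simp
    nlinarith [hs2 x]
  -- second derivative
  have hderiv2 : ∀ x : ℝ, HasDerivAt (fun x => c * Real.sin x / s x)
      (c * Real.cos x * (c ^ 2 + k) / s x ^ 3) x := by
    intro x
    have hnum : HasDerivAt (fun x => c * Real.sin x) (c * Real.cos x) x :=
      (Real.hasDerivAt_sin x).const_mul c
    have := hnum.div (hderiv_s x) (hspos x).ne'
    convert this using 1
    case e'_4 => rfl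
    case e'_5 => rfl
    case e'_8 => rfl
    have h1 := (hspos x).ne'
    have h2 := hs2 x
    have h3 := Real.sin_sq_add_cos_sq x
    field_simp
    linear_combination (-c*Real.cos x) * h2 + (-c^3*Real.cos x) * h3
  apply convexOn_of_hasDerivWithinAt2_nonneg (f' := fun x => c * Real.sin x / s x)
    (f'' := fun x => c * Real.cos x * (c ^ 2 + k) / s x ^ 3) (convex_Icc _ _)
  · exact fun x _ => ((hderiv_g x).continuousAt).continuousWithinAt
  · exact fun x _ => (hderiv_g x).hasDerivWithinAt
  · exact fun x _ => (hderiv2 x).hasDerivWithinAt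
  · intro x hx
    rw [interior_Icc] at hx
    have hcos : Real.cos x ≤ 0 := by
      apply Real.cos_nonpos_of_pi_div_two_le_of_le hx.1.le
      have := hx.2
      have hpi := Real.pi_pos
      linarith
    have hc0 : c < 0 := by linarith
    have : 0 ≤ c * Real.cos x := by nlinarith
    have hck : 0 < c ^ 2 + k := by positivity
    positivity
end

section
/- Let 0 ≤ c, γ > 0, β + 2c > 0, and d ≥ 2 an integer. Consider the minimization of Π_{i=1}^d r_i over tuples (r_i, θ_i)_{i∈[d]} with r_i ≥ 0, θ_i ∈ [0, 2π), Σθ_i ≡ (d−1)π (mod 2π), and |r_i e^{iθ_i} − c| ≥ r₀ where r₀² = (βγ−1)/γ² + (c+1/γ)². Then the value (−c·cos(π/d) + √(c²cos²(π/d) + (β+2c)/γ))^d is feasible, attained with all z_i equal with argument (d−1)π/d and lying on the circle |z − c| = r₀. -/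
lemma aux_abs_sq (r θ c : ℝ) :
    ‖(r : ℂ) * Complex.exp ((θ : ℂ) * Complex.I) - (c : ℂ)‖ ^ 2
      = r ^ 2 - 2 * r * c * Real.cos θ + c ^ 2 := by
  rw [Complex.sq_norm]
  simp [Complex.normSq_apply, Complex.exp_mul_I, Complex.cos_ofReal_re,
    Complex.sin_ofReal_im, Complex.sin_ofReal_re, Complex.cos_ofReal_im,
    Complex.mul_re, Complex.mul_im]
  nlinarith [Real.sin_sq_add_cos_sq θ]

theorem stmt15 (β γ c r₀ : ℝ) (hc : 0 ≤ c) (hγ : 0 < γ) (hβc : 0 < β + 2 * c)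
    (hr₀ : 0 ≤ r₀) (hr₀sq : r₀ ^ 2 = (β * γ - 1) / γ ^ 2 + (c + 1 / γ) ^ 2)
    (d : ℕ) (hd : 2 ≤ d) :
    let θ : ℝ := (d - 1 : ℝ) * Real.pi / d
    let r : ℝ := -c * Real.cos (Real.pi / d) +
      Real.sqrt (c ^ 2 * (Real.cos (Real.pi / d)) ^ 2 + (β + 2 * c) / γ)
    0 ≤ r ∧
      ‖(r : ℂ) * Complex.exp ((θ : ℂ) * Complex.I) - (c : ℂ)‖ = r₀ ∧
      (∃ k : ℤ, (d : ℝ) * θ = ((d : ℝ) - 1) * Real.pi + 2 * Real.pi * k) ∧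
      (∏ _i : Fin d, r) = r ^ d := by
  intro θ r
  have hd2 : (2:ℝ) ≤ (d:ℝ) := by exact_mod_cast hd
  have hdpos : (0:ℝ) < (d:ℝ) := by linarith
  have hθdef : θ = ((d:ℝ) - 1) * Real.pi / d := rfl
  set co := Real.cos (Real.pi / d) with hco
  have hrdef : r = -c * co + Real.sqrt (c ^ 2 * co ^ 2 + (β + 2 * c) / γ) := rfl
  clear_value θ r
  have hp : 0 < (β + 2 * c) / γ := div_pos hβc hγ
  have hs : Real.sqrt (c ^ 2 * co ^ 2 + (β + 2 * c) / γ) ^ 2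
      = c ^ 2 * co ^ 2 + (β + 2 * c) / γ := Real.sq_sqrt (by positivity)
  have hcos_nonneg : 0 ≤ co := by
    rw [hco]
    apply Real.cos_nonneg_of_mem_Icc
    constructor
    · have h1 : 0 ≤ Real.pi / d := by positivity
      linarith [Real.pi_pos]
    · rw [div_le_div_iff₀ hdpos (by norm_num)]
      nlinarith [Real.pi_pos]
  have hr0 : 0 ≤ r := by
    have h1 : c * co = Real.sqrt ((c * co) ^ 2) := (Real.sqrt_sq (by positivity)).symm
    have h2 : Real.sqrt ((c * co) ^ 2) ≤ Real.sqrt (c ^ 2 * co ^ 2 + (β + 2 * c) / γ) :=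
      Real.sqrt_le_sqrt (by nlinarith)
    rw [hrdef]; linarith
  have hkey : r ^ 2 + 2 * c * co * r = (β + 2 * c) / γ := by
    rw [hrdef]; nlinarith [hs]
  have hθcos : Real.cos θ = -co := by
    have h : θ = Real.pi - Real.pi / d := by
      rw [hθdef]; field_simp
    rw [h, Real.cos_pi_sub, hco]
  refine ⟨hr0, ?_, ⟨0, by
    have hdne : (d:ℝ) ≠ 0 := ne_of_gt hdpos
    rw [hθdef]; push_cast; field_simp; ring⟩, by simp⟩
  have habs2 : ‖(r : ℂ) * Complex.exp ((θ : ℂ) * Complex.I) - (c : ℂ)‖ ^ 2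
      = r ^ 2 - 2 * r * c * Real.cos θ + c ^ 2 := aux_abs_sq r θ c
  have hsq : ‖(r : ℂ) * Complex.exp ((θ : ℂ) * Complex.I) - (c : ℂ)‖ ^ 2 = r₀ ^ 2 := by
    rw [habs2, hθcos, hr₀sq]
    have hγ' : γ ≠ 0 := ne_of_gt hγ
    linear_combination hkey - β * γ⁻¹ * mul_inv_cancel₀ hγ'
  calc ‖(r : ℂ) * Complex.exp ((θ : ℂ) * Complex.I) - (c : ℂ)‖
      = Real.sqrt (‖(r : ℂ) * Complex.exp ((θ : ℂ) * Complex.I) - (c : ℂ)‖ ^ 2) :=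
        (Real.sqrt_sq (norm_nonneg _)).symm
    _ = Real.sqrt (r₀ ^ 2) := by rw [hsq]
    _ = r₀ := Real.sqrt_sq hr₀
end

section
/- Let 0 ≤ c < r₀, γ > 0, β > 0 with β + 2c > 0 and r₀² = (βγ−1)/γ² + (c+1/γ)², and let d ≥ 2. For any z₁,…,z_d ∈ ℂ with |z_i − c| ≥ r₀ for all i and Σ_{i} arg(z_i) ≡ (d−1)π (mod 2π) (arguments in [0,2π)), one has Π_i |z_i| ≥ (−c·cos(π/d) + √(c²cos²(π/d) + (β+2c)/γ))^d. -/
open Real Set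

noncomputable def Sq (c r₀ t : ℝ) : ℝ := Real.sqrt (r₀ ^ 2 - c ^ 2 * Real.sin t ^ 2)
noncomputable def ff (c r₀ t : ℝ) : ℝ := c * Real.cos t + Sq c r₀ t
noncomputable def gg (c r₀ t : ℝ) : ℝ := Real.log (ff c r₀ t)

variable {c r₀ : ℝ}

lemma inner_pos (hc : 0 ≤ c) (hcr : c < r₀) (t : ℝ) : 0 < r₀ ^ 2 - c ^ 2 * Real.sin t ^ 2 := by
  nlinarith [Real.sin_sq_le_one t, sq_nonneg (Real.sin t)]

lemma Sq_pos (hc : 0 ≤ c) (hcr : c < r₀) (t : ℝ) : 0 < Sq c r₀ t :=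
  Real.sqrt_pos.2 (inner_pos hc hcr t)

lemma Sq_sq (hc : 0 ≤ c) (hcr : c < r₀) (t : ℝ) :
    Sq c r₀ t ^ 2 = r₀ ^ 2 - c ^ 2 * Real.sin t ^ 2 :=
  Real.sq_sqrt (inner_pos hc hcr t).le

lemma ff_pos (hc : 0 ≤ c) (hcr : c < r₀) (t : ℝ) : 0 < ff c r₀ t := by
  have h1 : (c * Real.cos t) ^ 2 < Sq c r₀ t ^ 2 := by
    rw [Sq_sq hc hcr]
    nlinarith [Real.sin_sq_add_cos_sq t]
  have h2 := Sq_pos hc hcr t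
  unfold ff
  nlinarith [h1, h2]

lemma ff_neg (t : ℝ) : ff c r₀ (-t) = ff c r₀ t := by
  unfold ff Sq; rw [Real.cos_neg, Real.sin_neg]; ring_nf

lemma ff_reflect (hc : 0 ≤ c) (hcr : c < r₀) (t : ℝ) :
    ff c r₀ t * ff c r₀ (Real.pi - t) = r₀ ^ 2 - c ^ 2 := by
  unfold ff
  rw [Real.cos_pi_sub]
  have hS : Sq c r₀ (Real.pi - t) = Sq c r₀ t := by
    unfold Sq; rw [Real.sin_pi_sub]
  rw [hS]
  have h2 := Sq_sq hc hcr t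
  have h3 := Real.sin_sq_add_cos_sq t
  nlinarith [h2, h3]

lemma gg_reflect (hc : 0 ≤ c) (hcr : c < r₀) (t : ℝ) :
    gg c r₀ t + gg c r₀ (Real.pi - t) = Real.log (r₀ ^ 2 - c ^ 2) := by
  unfold gg
  rw [← Real.log_mul (ff_pos hc hcr t).ne' (ff_pos hc hcr _).ne', ff_reflect hc hcr]

lemma hasDerivAt_Sq (hc : 0 ≤ c) (hcr : c < r₀) (t : ℝ) :
    HasDerivAt (Sq c r₀) (-(c ^ 2 * Real.sin t * Real.cos t) / Sq c r₀ t) t := by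
  have h1 : HasDerivAt (fun t => r₀ ^ 2 - c ^ 2 * Real.sin t ^ 2)
      (-(2 * c ^ 2 * Real.sin t * Real.cos t)) t := by
    have := ((Real.hasDerivAt_sin t).pow 2).const_mul (c ^ 2)
    have h2 := (this.const_sub (r₀ ^ 2))
    refine h2.congr_deriv (Eq.symm ?_)
    ring
  have h3 := h1.sqrt (inner_pos hc hcr t).ne'
  refine h3.congr_deriv (Eq.symm ?_)
  unfold Sq
  ring

lemma hasDerivAt_gg (hc : 0 ≤ c) (hcr : c < r₀) (t : ℝ) :
    HasDerivAt (gg c r₀) (-(c * Real.sin t) / Sq c r₀ t) t := by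
  have hf : HasDerivAt (ff c r₀) (-(c * Real.sin t) - c ^ 2 * Real.sin t * Real.cos t / Sq c r₀ t) t := by
    have h1 := ((Real.hasDerivAt_cos t).const_mul c).add (hasDerivAt_Sq hc hcr t)
    refine h1.congr_deriv (Eq.symm ?_)
    ring
  have h2 := hf.log (ff_pos hc hcr t).ne'
  refine h2.congr_deriv (Eq.symm ?_)
  have hS := Sq_pos hc hcr t
  have hF := ff_pos hc hcr t
  have hfv : ff c r₀ t = c * Real.cos t + Sq c r₀ t := rfl
  rw [div_eq_div_iff hS.ne' hF.ne', hfv]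
  field_simp
  ring

lemma hasDerivAt_gg' (hc : 0 ≤ c) (hcr : c < r₀) (t : ℝ) :
    HasDerivAt (fun t => -(c * Real.sin t) / Sq c r₀ t)
      (-(c * Real.cos t * r₀ ^ 2) / Sq c r₀ t ^ 3) t := by
  have hnum : HasDerivAt (fun t => -(c * Real.sin t)) (-(c * Real.cos t)) t := by
    have := (Real.hasDerivAt_sin t).const_mul c
    exact (this.neg)
  have h := hnum.div (hasDerivAt_Sq hc hcr t) (Sq_pos hc hcr t).ne'
  refine h.congr_deriv (Eq.symm ?_)
  have hS := Sq_pos hc hcr t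
  have h2 := Sq_sq hc hcr t
  rw [div_eq_div_iff (by positivity : (Sq c r₀ t ^ 3) ≠ 0) (by positivity : (Sq c r₀ t ^ 2) ≠ 0)]
  field_simp
  linear_combination (c * Real.cos t) * h2

lemma gg_antitoneOn (hc : 0 ≤ c) (hcr : c < r₀) :
    AntitoneOn (gg c r₀) (Set.Icc 0 Real.pi) := by
  apply antitoneOn_of_hasDerivWithinAt_nonpos (convex_Icc _ _)
    (fun x _ => (hasDerivAt_gg hc hcr x).continuousAt.continuousWithinAt)
    (fun x _ => (hasDerivAt_gg hc hcr x).hasDerivWithinAt)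
  intro x hx
  rw [interior_Icc] at hx
  have hs : 0 ≤ Real.sin x := Real.sin_nonneg_of_nonneg_of_le_pi hx.1.le hx.2.le
  have := Sq_pos hc hcr x
  apply div_nonpos_of_nonpos_of_nonneg
  · nlinarith
  · exact this.le

lemma gg_concaveOn (hc : 0 ≤ c) (hcr : c < r₀) :
    ConcaveOn ℝ (Set.Icc 0 (Real.pi / 2)) (gg c r₀) := by
  apply concaveOn_of_hasDerivWithinAt2_nonpos (convex_Icc _ _)
    (fun x _ => (hasDerivAt_gg hc hcr x).continuousAt.continuousWithinAt)
    (f' := fun t => -(c * Real.sin t) / Sq c r₀ t)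
    (f'' := fun t => -(c * Real.cos t * r₀ ^ 2) / Sq c r₀ t ^ 3)
    (fun x _ => (hasDerivAt_gg hc hcr x).hasDerivWithinAt)
    (fun x _ => (hasDerivAt_gg' hc hcr x).hasDerivWithinAt)
  intro x hx
  rw [interior_Icc] at hx
  have hcos : 0 ≤ Real.cos x := Real.cos_nonneg_of_mem_Icc
    ⟨by linarith [hx.1, Real.pi_pos], hx.2.le⟩
  have := Sq_pos hc hcr x
  apply div_nonpos_of_nonpos_of_nonneg
  · have : 0 ≤ c * Real.cos x * r₀ ^ 2 := by positivity
    linarith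
  · positivity

lemma phi_mono (hc : 0 ≤ c) (hcr : c < r₀) {v w : ℝ} (hv : 0 ≤ v) (hvw : v ≤ w)
    (hw : w ≤ Real.pi) (hvw2 : v ≤ Real.pi - w) :
    Real.sin v / Sq c r₀ v ≤ Real.sin w / Sq c r₀ w := by
  have hsv : 0 ≤ Real.sin v := Real.sin_nonneg_of_nonneg_of_le_pi hv (by linarith)
  have hsw : 0 ≤ Real.sin w := Real.sin_nonneg_of_nonneg_of_le_pi (by linarith) hw
  have hss : Real.sin v ≤ Real.sin w := by
    rcases le_or_gt w (Real.pi / 2) with h | h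
    · exact (Real.strictMonoOn_sin.monotoneOn ⟨by linarith, by linarith⟩
        ⟨by linarith, by linarith⟩ hvw)
    · rw [← Real.sin_pi_sub w]
      exact Real.strictMonoOn_sin.monotoneOn ⟨by linarith, by linarith⟩
        ⟨by linarith, by linarith⟩ hvw2
  rw [div_le_div_iff₀ (Sq_pos hc hcr v) (Sq_pos hc hcr w)]
  have e1 : Real.sin v * Sq c r₀ w
      = Real.sqrt (Real.sin v ^ 2 * (r₀ ^ 2 - c ^ 2 * Real.sin w ^ 2)) := by
    unfold Sq
    rw [Real.sqrt_mul (sq_nonneg _), Real.sqrt_sq hsv]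
  have e2 : Real.sin w * Sq c r₀ v
      = Real.sqrt (Real.sin w ^ 2 * (r₀ ^ 2 - c ^ 2 * Real.sin v ^ 2)) := by
    unfold Sq
    rw [Real.sqrt_mul (sq_nonneg _), Real.sqrt_sq hsw]
  rw [e1, e2]
  apply Real.sqrt_le_sqrt
  have h2 : Real.sin v ^ 2 ≤ Real.sin w ^ 2 := by nlinarith
  nlinarith [mul_le_mul_of_nonneg_left h2 (sq_nonneg r₀)]

lemma star_ineq (hc : 0 ≤ c) (hcr : c < r₀) {d : ℕ} (hd : 2 ≤ d) {u : ℝ}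
    (hu1 : Real.pi / 2 ≤ u) (hu2 : u ≤ Real.pi) :
    ((d : ℝ) - 1) * gg c r₀ ((Real.pi - u) / ((d : ℝ) - 1)) + gg c r₀ u
      ≤ (d : ℝ) * gg c r₀ (Real.pi / d) := by
  have hπ := Real.pi_pos
  have hd2 : (2 : ℝ) ≤ (d : ℝ) := by exact_mod_cast hd
  set e : ℝ := (d : ℝ) - 1 with he_def
  have he : 1 ≤ e := by simp only [he_def]; linarith
  have he0 : e ≠ 0 := by linarith
  have hdpos : (0 : ℝ) < (d : ℝ) := by linarith
  set w₀ : ℝ := e * Real.pi / (d : ℝ) with hw₀_def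
  have hw₀π : w₀ ≤ Real.pi := by
    rw [hw₀_def, div_le_iff₀ hdpos]
    nlinarith
  have hw₀half : Real.pi / 2 ≤ w₀ := by
    rw [hw₀_def, le_div_iff₀ hdpos]
    nlinarith
  -- derivative of H
  have hDer : ∀ w : ℝ, HasDerivAt (fun w => e * gg c r₀ (w / e) - gg c r₀ w)
      (e * (-(c * Real.sin (w / e)) / Sq c r₀ (w / e) * (1 / e))
        - (-(c * Real.sin w) / Sq c r₀ w)) w := by
    intro w
    have h1 : HasDerivAt (fun w : ℝ => w / e) (1 / e) w := by
      simpa using (hasDerivAt_id w).div_const e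
    have h2 := (hasDerivAt_gg hc hcr (w / e)).comp w h1
    exact (h2.const_mul e).sub (hasDerivAt_gg hc hcr w)
  have hH : MonotoneOn (fun w => e * gg c r₀ (w / e) - gg c r₀ w) (Set.Icc 0 w₀) := by
    apply monotoneOn_of_hasDerivWithinAt_nonneg (convex_Icc _ _)
      (fun x _ => (hDer x).continuousAt.continuousWithinAt)
      (fun x _ => (hDer x).hasDerivWithinAt)
    intro w hw
    rw [interior_Icc] at hw
    set v := w / e with hv_def
    have hv0 : 0 ≤ v := by
      have : 0 < w := hw.1
      positivity
    have hvw : v ≤ w := div_le_self hw.1.le he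
    have hwπ : w ≤ Real.pi := le_trans hw.2.le hw₀π
    have hvw2 : v ≤ Real.pi - w := by
      rw [hv_def, div_le_iff₀ (by linarith : (0:ℝ) < e)]
      have hwle : w * (d : ℝ) ≤ e * Real.pi := by
        have := hw.2.le
        rw [hw₀_def, le_div_iff₀ hdpos] at this
        linarith
      nlinarith
    have hp := phi_mono hc hcr hv0 hvw hwπ hvw2
    have hkey : ∀ X Y : ℝ, (0:ℝ) ≤ X - Y → (0:ℝ) ≤ e * (X * (1 / e)) - Y := by
      intro X Y hXY
      have : e * (X * (1 / e)) = X := by field_simp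
      linarith
    apply hkey
    have e3 : -(c * Real.sin v) / Sq c r₀ v = -(c * (Real.sin v / Sq c r₀ v)) := by ring
    have e4 : -(c * Real.sin w) / Sq c r₀ w = -(c * (Real.sin w / Sq c r₀ w)) := by ring
    rw [e3, e4]
    have := mul_le_mul_of_nonneg_left hp hc
    linarith
  have hmem1 : Real.pi - u ∈ Set.Icc 0 w₀ := ⟨by linarith, by linarith⟩
  have hmem2 : w₀ ∈ Set.Icc 0 w₀ := ⟨by positivity, le_refl _⟩
  have h := hH hmem1 hmem2 (by linarith : Real.pi - u ≤ w₀)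
  simp only [] at h
  have hw₀e : w₀ / e = Real.pi / d := by
    rw [hw₀_def]
    field_simp
  have hw₀eq : w₀ = Real.pi - Real.pi / d := by
    rw [hw₀_def]
    field_simp
    ring
  rw [hw₀e] at h
  have hr1 := gg_reflect hc hcr u
  have hr2 := gg_reflect hc hcr (Real.pi / d)
  rw [← hw₀eq] at hr2
  have hgoal : (d : ℝ) * gg c r₀ (Real.pi / d) = e * gg c r₀ (Real.pi / d) + gg c r₀ (Real.pi / d) := by
    rw [he_def]; ring
  linarith

lemma jensen_gg (hc : 0 ≤ c) (hcr : c < r₀) {ι : Type*} (t : Finset ι) (ht : t.Nonempty)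
    (y : ι → ℝ) (hy : ∀ i ∈ t, y i ∈ Set.Icc 0 (Real.pi / 2)) :
    ∑ i ∈ t, gg c r₀ (y i) ≤ (t.card : ℝ) * gg c r₀ ((∑ i ∈ t, y i) / t.card) := by
  have hcard : (0 : ℝ) < (t.card : ℝ) := by
    exact_mod_cast Finset.card_pos.mpr ht
  have h := (gg_concaveOn hc hcr).le_map_sum (w := fun _ => (t.card : ℝ)⁻¹) (p := y) (t := t)
    (fun i _ => by positivity)
    (by rw [Finset.sum_const, nsmul_eq_mul]; field_simp) hy
  simp only [smul_eq_mul] at h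
  rw [← Finset.mul_sum, ← Finset.mul_sum] at h
  have h2 := mul_le_mul_of_nonneg_left h hcard.le
  rw [← mul_assoc, mul_inv_cancel₀ hcard.ne', one_mul] at h2
  calc ∑ i ∈ t, gg c r₀ (y i) ≤ (t.card : ℝ) * gg c r₀ ((t.card : ℝ)⁻¹ * ∑ i ∈ t, y i) := h2
    _ = (t.card : ℝ) * gg c r₀ ((∑ i ∈ t, y i) / t.card) := by rw [inv_mul_eq_div]

lemma claimC (hc : 0 ≤ c) (hcr : c < r₀) {d : ℕ} (hd : 2 ≤ d) (y : Fin d → ℝ)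
    (hy : ∀ i, y i ∈ Set.Icc 0 Real.pi) (hsum : Real.pi ≤ ∑ i, y i) :
    ∑ i, gg c r₀ (y i) ≤ (d : ℝ) * gg c r₀ (Real.pi / d) := by
  have hπ := Real.pi_pos
  have hd2 : (2 : ℝ) ≤ (d : ℝ) := by exact_mod_cast hd
  have hT : 0 < ∑ i, y i := lt_of_lt_of_le hπ hsum
  set T := ∑ i, y i with hT_def
  set y' : Fin d → ℝ := fun i => (Real.pi / T) * y i with hy'_def
  have hlam1 : Real.pi / T ≤ 1 := by rw [div_le_one hT]; exact hsum
  have hlam0 : 0 < Real.pi / T := by positivity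
  have hy'le : ∀ i, y' i ≤ y i := by
    intro i
    have h0 := (hy i).1
    calc y' i = (Real.pi / T) * y i := rfl
      _ ≤ 1 * y i := mul_le_mul_of_nonneg_right hlam1 h0
      _ = y i := one_mul _
  have hy'0 : ∀ i, 0 ≤ y' i := fun i => mul_nonneg hlam0.le (hy i).1
  have hy'mem : ∀ i, y' i ∈ Set.Icc 0 Real.pi :=
    fun i => ⟨hy'0 i, le_trans (hy'le i) (hy i).2⟩
  have hy'sum : ∑ i, y' i = Real.pi := by
    rw [hy'_def, ← Finset.mul_sum, ← hT_def]
    field_simp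
  have hstep : ∑ i, gg c r₀ (y i) ≤ ∑ i, gg c r₀ (y' i) :=
    Finset.sum_le_sum (fun i _ => gg_antitoneOn hc hcr (hy'mem i) (hy i) (hy'le i))
  refine le_trans hstep ?_
  by_cases hbig : ∃ i₀, Real.pi / 2 < y' i₀
  · obtain ⟨i₀, hi₀⟩ := hbig
    have hsmall : ∀ j, j ≠ i₀ → y' j ≤ Real.pi / 2 := by
      intro j hj
      by_contra hcon
      push_neg at hcon
      have hpair : y' i₀ + y' j ≤ ∑ i, y' i := by
        rw [← Finset.sum_pair (Ne.symm hj)]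
        exact Finset.sum_le_sum_of_subset_of_nonneg (Finset.subset_univ _)
          (fun i _ _ => hy'0 i)
      rw [hy'sum] at hpair
      linarith
    set t : Finset (Fin d) := Finset.univ.erase i₀ with ht_def
    have htcard : (t.card : ℝ) = (d : ℝ) - 1 := by
      rw [ht_def, Finset.card_erase_of_mem (Finset.mem_univ _), Finset.card_univ,
        Fintype.card_fin]
      have h1 : 1 ≤ d := by omega
      push_cast [Nat.cast_sub h1]
      ring
    have htne : t.Nonempty := by
      rw [← Finset.card_pos, ht_def, Finset.card_erase_of_mem (Finset.mem_univ _),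
        Finset.card_univ, Fintype.card_fin]
      omega
    have hsum_t : ∑ i ∈ t, y' i = Real.pi - y' i₀ := by
      have := Finset.sum_erase_add Finset.univ y' (Finset.mem_univ i₀)
      rw [hy'sum] at this
      rw [ht_def]
      linarith
    have hjens := jensen_gg hc hcr t htne y'
      (fun j hj => ⟨hy'0 j, hsmall j (Finset.ne_of_mem_erase hj)⟩)
    rw [hsum_t, htcard] at hjens
    have hstar := star_ineq hc hcr hd hi₀.le (hy'mem i₀).2
    have hsplit : ∑ i, gg c r₀ (y' i) = (∑ i ∈ t, gg c r₀ (y' i)) + gg c r₀ (y' i₀) := by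
      rw [ht_def]
      exact (Finset.sum_erase_add Finset.univ _ (Finset.mem_univ i₀)).symm
    rw [hsplit]
    linarith
  · push_neg at hbig
    have hne : (Finset.univ : Finset (Fin d)).Nonempty := by
      rw [← Finset.card_pos, Finset.card_univ, Fintype.card_fin]; omega
    have hjens := jensen_gg hc hcr Finset.univ hne y'
      (fun j _ => ⟨hy'0 j, hbig j⟩)
    rw [hy'sum, Finset.card_univ, Fintype.card_fin] at hjens
    exact hjens

lemma modulus_lb (hc : 0 ≤ c) (hcr : c < r₀) {t ρ : ℝ} (hρ0 : 0 ≤ ρ)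
    (hout2 : r₀ ^ 2 ≤ (ρ * Real.cos t - c) ^ 2 + (ρ * Real.sin t) ^ 2) :
    ff c r₀ t ≤ ρ := by
  have hSsq := Sq_sq hc hcr t
  have hSpos := Sq_pos hc hcr t
  have htrig := Real.sin_sq_add_cos_sq t
  have hA : (ρ - c * Real.cos t) ^ 2 - Sq c r₀ t ^ 2
      = ((ρ * Real.cos t - c) ^ 2 + (ρ * Real.sin t) ^ 2) - r₀ ^ 2 := by
    rw [hSsq]
    linear_combination (c ^ 2 - ρ ^ 2) * htrig
  have hfactor : 0 ≤ (ρ - c * Real.cos t - Sq c r₀ t) * (ρ - c * Real.cos t + Sq c r₀ t) := by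
    nlinarith [hA, hout2]
  have hgap : (c * Real.cos t) ^ 2 < Sq c r₀ t ^ 2 := by
    rw [hSsq]
    nlinarith [htrig]
  have hbpos : 0 < ρ - c * Real.cos t + Sq c r₀ t := by
    nlinarith [hgap, hSpos, hρ0]
  unfold ff
  nlinarith [hfactor, hbpos]

theorem stmt16 (β γ c r₀ : ℝ) (hc : 0 ≤ c) (hcr : c < r₀) (hγ : 0 < γ) (hβ : 0 < β)
    (hβc : 0 < β + 2 * c) (hr₀sq : r₀ ^ 2 = (β * γ - 1) / γ ^ 2 + (c + 1 / γ) ^ 2)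
    (d : ℕ) (hd : 2 ≤ d) (z : Fin d → ℂ) (θ : Fin d → ℝ)
    (hθ : ∀ i, θ i ∈ Set.Ico 0 (2 * Real.pi))
    (harg : ∀ i, z i = ((‖z i‖ : ℝ) : ℂ) * Complex.exp ((θ i : ℂ) * Complex.I))
    (hout : ∀ i, r₀ ≤ ‖z i - (c : ℂ)‖)
    (hsum : ∃ k : ℤ, (∑ i, θ i) = ((d : ℝ) - 1) * Real.pi + 2 * Real.pi * k) :
    (∏ i, ‖z i‖) ≥
      (-c * Real.cos (Real.pi / d) +
        Real.sqrt (c ^ 2 * (Real.cos (Real.pi / d)) ^ 2 + (β + 2 * c) / γ)) ^ d := by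
  have hπ := Real.pi_pos
  have hd2 : (2 : ℝ) ≤ (d : ℝ) := by exact_mod_cast hd
  have hK : r₀ ^ 2 - c ^ 2 = (β + 2 * c) / γ := by
    have hγ' : γ ≠ 0 := hγ.ne'
    have h2 : r₀ ^ 2 * γ ^ 2 = β * γ - 1 + (c * γ + 1) ^ 2 := by
      field_simp at hr₀sq
      linear_combination hr₀sq
    rw [eq_div_iff hγ']
    apply mul_right_cancel₀ hγ'
    linear_combination h2
  have hbase : -c * Real.cos (Real.pi / d) +
      Real.sqrt (c ^ 2 * (Real.cos (Real.pi / d)) ^ 2 + (β + 2 * c) / γ)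
      = ff c r₀ (Real.pi - Real.pi / d) := by
    unfold ff Sq
    rw [Real.cos_pi_sub, Real.sin_pi_sub]
    have h1 : r₀ ^ 2 - c ^ 2 * Real.sin (Real.pi / d) ^ 2
        = c ^ 2 * (Real.cos (Real.pi / d)) ^ 2 + (β + 2 * c) / γ := by
      have h2 := Real.sin_sq_add_cos_sq (Real.pi / d)
      nlinarith [hK, h2]
    rw [h1]
    ring
  -- Step 1 : modulus lower bound pointwise
  have hstep : ∀ i, ff c r₀ (θ i) ≤ ‖z i‖ := by
    intro i
    obtain ⟨ρ, hρ0, hzeq⟩ : ∃ ρ : ℝ, 0 ≤ ρ ∧ z i = (ρ : ℂ) * Complex.exp ((θ i : ℂ) * Complex.I) :=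
      ⟨_, norm_nonneg _, harg i⟩
    have habs : ‖z i‖ = ρ := by
      rw [hzeq, norm_mul, Complex.norm_exp_ofReal_mul_I, Complex.norm_real, Real.norm_eq_abs,
        abs_of_nonneg hρ0, mul_one]
    rw [habs]
    apply modulus_lb hc hcr hρ0
    have hz2 : ‖z i - c‖ ^ 2
        = (ρ * Real.cos (θ i) - c) ^ 2 + (ρ * Real.sin (θ i)) ^ 2 := by
      rw [hzeq, Complex.exp_mul_I, Complex.sq_norm, Complex.normSq_apply]
      simp [← Complex.ofReal_cos, ← Complex.ofReal_sin]
      ring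
    rw [← hz2]
    have h := hout i
    nlinarith [h, hcr, hc]
  have hprodle : ∏ i, ff c r₀ (θ i) ≤ ∏ i, ‖z i‖ :=
    Finset.prod_le_prod (fun i _ => (ff_pos hc hcr (θ i)).le) (fun i _ => hstep i)
  -- Step 2 : product of ff lower bound
  obtain ⟨k, hk⟩ := hsum
  set y : Fin d → ℝ := fun i => |Real.pi - θ i| with hy_def
  have hymem : ∀ i, y i ∈ Set.Icc 0 Real.pi := by
    intro i
    have h := hθ i
    refine ⟨abs_nonneg _, ?_⟩
    rw [hy_def, abs_le]
    constructor
    · linarith [h.2]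
    · linarith [h.1]
  have hysum : Real.pi ≤ ∑ i, y i := by
    have h1 : |∑ i, (Real.pi - θ i)| ≤ ∑ i, y i := Finset.abs_sum_le_sum_abs _ _
    have h2 : ∑ i, (Real.pi - θ i) = Real.pi * (1 - 2 * (k : ℝ)) := by
      rw [Finset.sum_sub_distrib, Finset.sum_const, Finset.card_univ, Fintype.card_fin, hk]
      ring
    have h3 : Real.pi ≤ |Real.pi * (1 - 2 * (k : ℝ))| := by
      rw [abs_mul, abs_of_pos hπ]
      have h4 : (1 : ℝ) ≤ |1 - 2 * (k : ℝ)| := by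
        rcases le_or_gt k 0 with h | h
        · have hk' : (k : ℝ) ≤ 0 := by exact_mod_cast h
          rw [abs_of_nonneg (by linarith)]
          linarith
        · have hk' : (1 : ℝ) ≤ (k : ℝ) := by exact_mod_cast h
          rw [abs_of_nonpos (by linarith)]
          linarith
      nlinarith [h4, hπ]
    rw [h2] at h1
    linarith
  have hgy : ∀ i, gg c r₀ (θ i) = Real.log (r₀ ^ 2 - c ^ 2) - gg c r₀ (y i) := by
    intro i
    have hrefl := gg_reflect hc hcr (θ i)
    have heven : gg c r₀ (y i) = gg c r₀ (Real.pi - θ i) := by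
      rcases abs_cases (Real.pi - θ i) with ⟨h, _⟩ | ⟨h, _⟩
      · rw [hy_def]; simp only; rw [h]
      · rw [hy_def]; simp only; rw [h]
        unfold gg; rw [ff_neg]
    linarith
  have hC := claimC hc hcr hd y hymem hysum
  have hsum_gg : (d : ℝ) * gg c r₀ (Real.pi - Real.pi / d) ≤ ∑ i, gg c r₀ (θ i) := by
    have hsplit : ∑ i, gg c r₀ (θ i)
        = (d : ℝ) * Real.log (r₀ ^ 2 - c ^ 2) - ∑ i, gg c r₀ (y i) := by
      calc ∑ i, gg c r₀ (θ i)
          = ∑ i, (Real.log (r₀ ^ 2 - c ^ 2) - gg c r₀ (y i)) :=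
            Finset.sum_congr rfl (fun i _ => hgy i)
        _ = _ := by
            rw [Finset.sum_sub_distrib, Finset.sum_const, Finset.card_univ, Fintype.card_fin,
              nsmul_eq_mul]
    rw [hsplit]
    have hrefl2 := gg_reflect hc hcr (Real.pi / d)
    have h6 : (d : ℝ) * gg c r₀ (Real.pi / d) + (d : ℝ) * gg c r₀ (Real.pi - Real.pi / d)
        = (d : ℝ) * Real.log (r₀ ^ 2 - c ^ 2) := by linear_combination (d : ℝ) * hrefl2
    linarith [hC, h6]
  have hffpos := ff_pos hc hcr (Real.pi - Real.pi / d)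
  have hprodpos : 0 < ∏ i, ff c r₀ (θ i) := Finset.prod_pos (fun i _ => ff_pos hc hcr (θ i))
  have hlog : Real.log (ff c r₀ (Real.pi - Real.pi / d) ^ d) ≤ Real.log (∏ i, ff c r₀ (θ i)) := by
    rw [Real.log_pow, Real.log_prod (fun i _ => (ff_pos hc hcr (θ i)).ne')]
    unfold gg at hsum_gg
    exact_mod_cast hsum_gg
  have hfinal : ff c r₀ (Real.pi - Real.pi / d) ^ d ≤ ∏ i, ff c r₀ (θ i) :=
    (Real.log_le_log_iff (pow_pos hffpos d) hprodpos).mp hlog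
  rw [ge_iff_le, hbase]
  exact le_trans hfinal hprodle
end

section
/- Let γ > 0 and d ≥ 2 an integer. For any z₁,…,z_d ∈ ℂ with Re(z_i) ≤ −1/γ for all i and Σ_i arg(z_i) ≡ (d−1)π (mod 2π) (arguments taken in (π/2, 3π/2)), one has Π_i |z_i| ≥ 1/(γ^d cos^d(π/d)). -/
theorem stmt17 (γ : ℝ) (hγ : 0 < γ) (d : ℕ) (hd : 2 ≤ d) (z : Fin d → ℂ)
    (θ : Fin d → ℝ) (hθ : ∀ i, θ i ∈ Set.Ioo (Real.pi / 2) (3 * Real.pi / 2))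
    (harg : ∀ i, z i = (‖z i‖ : ℂ) * Complex.exp ((θ i : ℂ) * Complex.I))
    (hre : ∀ i, (z i).re ≤ -1 / γ)
    (hsum : ∃ k : ℤ, (∑ i, θ i) = ((d : ℝ) - 1) * Real.pi + 2 * Real.pi * k) :
    (∏ i, ‖z i‖) ≥ 1 / (γ ^ d * (Real.cos (Real.pi / d)) ^ d) := by
  obtain ⟨k, hk⟩ := hsum
  have hπ := Real.pi_pos
  set c : Fin d → ℝ := fun i => -Real.cos (θ i) with hc
  have hcpos : ∀ i, 0 < c i := by
    intro i
    have h := hθ i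
    have : Real.cos (θ i) < 0 := by
      apply Real.cos_neg_of_pi_div_two_lt_of_lt h.1
      have := h.2; linarith
    simpa [hc] using this
  have hreeq : ∀ i, (z i).re = ‖z i‖ * Real.cos (θ i) := by
    intro i
    rw [harg i]
    simp [Complex.mul_re, Complex.exp_ofReal_mul_I_re]
  have hr : ∀ i, 1 / (γ * c i) ≤ ‖z i‖ := by
    intro i
    have h1 : ‖z i‖ * Real.cos (θ i) ≤ -1 / γ := by
      rw [← hreeq i]; exact hre i
    have h2 : 1 / γ ≤ ‖z i‖ * c i := by
      rw [neg_div] at h1; simp only [hc]; nlinarith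
    rw [div_le_iff₀ (mul_pos hγ (hcpos i))]
    calc (1:ℝ) = (1/γ) * γ := by field_simp
    _ ≤ (‖z i‖ * c i) * γ := by
        apply mul_le_mul_of_nonneg_right h2 hγ.le
    _ = ‖z i‖ * (γ * c i) := by ring
  -- d = 2 case: RHS is 0
  rcases eq_or_lt_of_le hd with hd2 | hd3
  · subst hd2
    have : Real.cos (Real.pi / (2:ℕ)) = 0 := by
      norm_num [Real.cos_pi_div_two]
    rw [this]
    simp only [ne_eq, OfNat.ofNat_ne_zero, not_false_eq_true, zero_pow, mul_zero, div_zero]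
    exact Finset.prod_nonneg fun i _ => norm_nonneg _
  -- main case d ≥ 3
  have hdpos : (0:ℝ) < d := by positivity
  set φ : Fin d → ℝ := fun i => θ i - Real.pi with hφ
  have hφmem : ∀ i, φ i ∈ Set.Icc (-(Real.pi/2)) (Real.pi/2) := by
    intro i
    have h := hθ i
    constructor <;> [linarith [h.1]; linarith [h.2]]
  have hcφ : ∀ i, c i = Real.cos (φ i) := by
    intro i
    simp [hc, hφ, Real.cos_sub_pi]
  have hsumφ : ∑ i, φ i = (2 * k - 1) * Real.pi := by
    simp only [hφ, Finset.sum_sub_distrib, hk, Finset.sum_const, Finset.card_univ,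
      Fintype.card_fin, nsmul_eq_mul]
    push_cast
    ring
  -- bound on |2k-1|
  have habs : |∑ i, φ i| ≤ d * (Real.pi / 2) := by
    calc |∑ i, φ i| ≤ ∑ i, |φ i| := Finset.abs_sum_le_sum_abs _ _
    _ ≤ ∑ _i : Fin d, Real.pi / 2 := by
        apply Finset.sum_le_sum
        intro i _
        exact abs_le.2 ⟨(hφmem i).1, (hφmem i).2⟩
    _ = d * (Real.pi / 2) := by
        simp [Finset.sum_const, Finset.card_univ, nsmul_eq_mul]
  have hm1 : (1:ℝ) ≤ |(2 * (k:ℝ) - 1)| := by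
    have : (2 * (k:ℝ) - 1) = ((2 * k - 1 : ℤ) : ℝ) := by push_cast; ring
    rw [this, ← Int.cast_abs]
    have hne : (2 * k - 1 : ℤ) ≠ 0 := by omega
    exact_mod_cast Int.one_le_abs (by omega)
  have hm2 : |(2 * (k:ℝ) - 1)| * Real.pi ≤ d * (Real.pi / 2) := by
    calc |(2 * (k:ℝ) - 1)| * Real.pi = |(2 * (k:ℝ) - 1) * Real.pi| := by
          rw [abs_mul, abs_of_pos hπ]
    _ = |∑ i, φ i| := by rw [hsumφ]
    _ ≤ d * (Real.pi / 2) := habs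
  set A : ℝ := (2 * (k:ℝ) - 1) * Real.pi / d with hA
  have hAabs : |A| ≤ Real.pi / 2 := by
    rw [hA, abs_div, abs_of_pos hdpos, abs_mul, abs_of_pos hπ,
      div_le_iff₀ hdpos]
    calc |(2 * (k:ℝ) - 1)| * Real.pi ≤ d * (Real.pi / 2) := hm2
    _ = Real.pi / 2 * d := by ring
  have hAlb : Real.pi / d ≤ |A| := by
    rw [hA, abs_div, abs_of_pos hdpos, abs_mul, abs_of_pos hπ]
    gcongr
    nlinarith
  -- cos of average is at most cos (π/d)
  have hcosA : Real.cos A ≤ Real.cos (Real.pi / d) := by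
    rw [← Real.cos_abs A]
    apply Real.cos_le_cos_of_nonneg_of_le_pi (by positivity) ?_ hAlb
    linarith
  -- Jensen
  have hjensen : ∑ i, (1/(d:ℝ)) • Real.cos (φ i) ≤ Real.cos (∑ i, (1/(d:ℝ)) • φ i) := by
    apply strictConcaveOn_cos_Icc.concaveOn.le_map_sum
    · intro i _; positivity
    · simp [Finset.sum_const, Finset.card_univ, nsmul_eq_mul]
      field_simp
    · intro i _; exact hφmem i
  have hsum_smul : ∑ i, (1/(d:ℝ)) • φ i = A := by
    rw [← Finset.smul_sum, hsumφ, hA]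
    simp [smul_eq_mul]
    ring
  have hAM : ∑ i, (1/(d:ℝ)) * c i ≤ Real.cos (Real.pi / d) := by
    calc ∑ i, (1/(d:ℝ)) * c i = ∑ i, (1/(d:ℝ)) • Real.cos (φ i) := by
          simp only [smul_eq_mul, hcφ]
    _ ≤ Real.cos (∑ i, (1/(d:ℝ)) • φ i) := hjensen
    _ = Real.cos A := by rw [hsum_smul]
    _ ≤ Real.cos (Real.pi / d) := hcosA
  -- GM ≤ AM
  have hGM : ∏ i, (c i) ^ (1/(d:ℝ)) ≤ ∑ i, (1/(d:ℝ)) * c i := by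
    apply Real.geom_mean_le_arith_mean_weighted
    · intro i _; positivity
    · simp [Finset.sum_const, Finset.card_univ, nsmul_eq_mul]
      field_simp
    · intro i _; exact (hcpos i).le
  have hM : Real.cos (Real.pi / d) > 0 := by
    apply Real.cos_pos_of_mem_Ioo
    constructor
    · have : 0 < Real.pi / d := by positivity
      linarith
    · rw [div_lt_div_iff₀ hdpos (by norm_num : (0:ℝ) < 2)]
      have hd3' : (2:ℝ) < d := by exact_mod_cast hd3
      nlinarith
  have hprodc : ∏ i, c i ≤ (Real.cos (Real.pi / d)) ^ d := by
    have hP : (0:ℝ) ≤ ∏ i, (c i) ^ (1/(d:ℝ)) :=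
      Finset.prod_nonneg fun i _ => Real.rpow_nonneg (hcpos i).le _
    have h1 : (∏ i, (c i) ^ (1/(d:ℝ))) ^ d ≤ (Real.cos (Real.pi / d)) ^ d :=
      pow_le_pow_left₀ hP (hGM.trans hAM) d
    calc ∏ i, c i = (∏ i, (c i) ^ (1/(d:ℝ))) ^ d := by
          rw [← Finset.prod_pow]
          apply Finset.prod_congr rfl
          intro i _
          rw [← Real.rpow_natCast ((c i) ^ (1/(d:ℝ))) d, ← Real.rpow_mul (hcpos i).le]
          rw [one_div, inv_mul_cancel₀ (by positivity : (d:ℝ) ≠ 0), Real.rpow_one]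
    _ ≤ _ := h1
  -- finish
  have hprodcpos : (0:ℝ) < ∏ i, c i := Finset.prod_pos fun i _ => hcpos i
  calc 1 / (γ ^ d * (Real.cos (Real.pi / d)) ^ d)
      ≤ 1 / (γ ^ d * ∏ i, c i) := by
        apply one_div_le_one_div_of_le (by positivity)
        exact mul_le_mul_of_nonneg_left hprodc (by positivity)
    _ = ∏ i, 1 / (γ * c i) := by
        rw [Finset.prod_div_distrib, Finset.prod_const_one, Finset.prod_mul_distrib,
          Finset.prod_const, Finset.card_univ, Fintype.card_fin]
    _ ≤ ∏ i, ‖z i‖ := by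
        apply Finset.prod_le_prod
        · intro i _; exact div_nonneg zero_le_one (mul_pos hγ (hcpos i)).le
        · intro i _; exact hr i
end
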